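/- In the symmetric Gaussian primitive relay channel bound, for any P, N > 0 and R₀ ≥ 0, the value min{ (1/2)log₂(1+2P/N), min over a ∈ [0,R₀] of max((1/2)log₂(1+P/N)+R₀−a, (1/2)log₂(1+P/N)+a+√(2a ln2)·log₂ e) } is strictly less than min{ (1/2)log₂(1+2P/N), (1/2)log₂(1+P/N)+R₀ } whenever R₀ > 0 and (1/2)log₂(1+P/N)+R₀ < (1/2)log₂(1+2P/N); i.e., the new bound strictly improves the cut-set bound whenever the multiple-access cut is active. -/

import Mathlib

/-!
Taking a small `a > 0` lowers the first branch `C + R₀ - a` by `a`, while the second branch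
exceeds `C` only by `a + O(√a)`, which is still below `R₀`. Hence the constrained minimum lies
strictly below `C + R₀`, and `C + R₀` is the smaller cut-set term when the multiple-access cut
is active.
-/

open Filter Set Topology

theorem sInf_max_image_Icc_lt {ψ : ℝ → ℝ} {C R : ℝ} (hR : 0 < R)
    (hψ : Tendsto ψ (𝓝[>] 0) (𝓝 0)) :
    sInf ((fun a : ℝ => max (C + R - a) (C + a + ψ a)) '' Icc 0 R) < C + R := by
  have hsmall : ∀ᶠ a in 𝓝[>] (0 : ℝ), a + ψ a < R :=
    ((tendsto_nhdsWithin_of_tendsto_nhds tendsto_id).add hψ).eventually_lt_const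
      (by simpa using hR)
  have hbelow : ∀ᶠ a in 𝓝[>] (0 : ℝ), a < R :=
    tendsto_nhdsWithin_of_tendsto_nhds tendsto_id |>.eventually_lt_const hR
  obtain ⟨a, ha_small, ha_lt, ha_pos⟩ :=
    (hsmall.and (hbelow.and self_mem_nhdsWithin)).exists
  have hbdd : BddBelow ((fun a : ℝ => max (C + R - a) (C + a + ψ a)) '' Icc 0 R) := by
    refine ⟨C, ?_⟩
    rintro _ ⟨b, ⟨-, hbR⟩, rfl⟩
    exact le_max_of_le_left (by linarith)
  calc sInf _ ≤ max (C + R - a) (C + a + ψ a) :=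
        csInf_le hbdd ⟨a, ⟨ha_pos.le, ha_lt.le⟩, rfl⟩
    _ < C + R := max_lt (by linarith) (by linarith)

theorem new_bound_strictly_improves_general (P N R₀ : ℝ) (hR₀ : 0 < R₀)
    (hactive : (1/2) * Real.logb 2 (1 + P / N) + R₀ < (1/2) * Real.logb 2 (1 + 2 * P / N)) :
    min ((1/2) * Real.logb 2 (1 + 2 * P / N))
        (sInf ((fun a : ℝ =>
          max ((1/2) * Real.logb 2 (1 + P / N) + R₀ - a)
            ((1/2) * Real.logb 2 (1 + P / N) + a +
              Real.sqrt (2 * a * Real.log 2) * Real.logb 2 (Real.exp 1))) '' Set.Icc 0 R₀))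
      < min ((1/2) * Real.logb 2 (1 + 2 * P / N))
          ((1/2) * Real.logb 2 (1 + P / N) + R₀) := by
  have hpenalty : Tendsto (fun a : ℝ => Real.sqrt (2 * a * Real.log 2) * Real.logb 2 (Real.exp 1))
      (𝓝[>] 0) (𝓝 0) := by
    refine tendsto_nhdsWithin_of_tendsto_nhds ?_
    have hcont : Continuous fun a : ℝ =>
        Real.sqrt (2 * a * Real.log 2) * Real.logb 2 (Real.exp 1) := by fun_prop
    simpa using hcont.tendsto 0
  rw [min_eq_right hactive.le]
  exact (min_le_right _ _).trans_lt (sInf_max_image_Icc_lt hR₀ hpenalty)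

/-- The new bound strictly improves the cut-set bound whenever `R₀ > 0` and the
multiple-access cut is active. -/
theorem new_bound_strictly_improves (P N R₀ : ℝ) (hP : 0 < P) (hN : 0 < N) (hR₀ : 0 < R₀)
    (hactive : (1/2) * Real.logb 2 (1 + P / N) + R₀ < (1/2) * Real.logb 2 (1 + 2 * P / N)) :
    min ((1/2) * Real.logb 2 (1 + 2 * P / N))
        (sInf ((fun a : ℝ =>
          max ((1/2) * Real.logb 2 (1 + P / N) + R₀ - a)
            ((1/2) * Real.logb 2 (1 + P / N) + a +
              Real.sqrt (2 * a * Real.log 2) * Real.logb 2 (Real.exp 1))) '' Set.Icc 0 R₀))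
      < min ((1/2) * Real.logb 2 (1 + 2 * P / N))
          ((1/2) * Real.logb 2 (1 + P / N) + R₀) :=
  new_bound_strictly_improves_general P N R₀ hR₀ hactive
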